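/- Let k be an algebraically closed field of characteristic p > 0. For every sequence (f_n)_{n≥0} where each f_n is a unit of the subring k((t))^{p^n} ⊆ k((t)), there exist a digit sequence (a_n) and units u_n of k((t))^{p^n} such that f_n = u_n · t^{a_n p^n} · u_{n+1}⁻¹ in k((t)) for all n ≥ 0. (Every stratified line bundle on k((t)) is isomorphic to O(α) for some p-adic integer α.) -/

import Mathlib

/-- The element `t` of `k((t))`. -/
noncomputable def tt (k : Type*) [Field k] : LaurentSeries k := HahnSeries.single 1 1

/-- `f ∈ k((t))` lies in the subring `k((t))^{pⁿ}` of `pⁿ`-th powers: since `k` is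
perfect, this means exactly that the support of `f` consists of multiples of `pⁿ`. -/
def InLaurentSeriesPow (k : Type*) [Field k] (p n : ℕ) (f : LaurentSeries k) : Prop :=
  ∀ i ∈ f.support, ((p : ℤ) ^ n) ∣ i

/-- `f` is a unit of the subring `k((t))^{pⁿ}`. -/
def IsUnitLaurentSeriesPow (k : Type*) [Field k] (p n : ℕ) (f : LaurentSeries k) : Prop :=
  InLaurentSeriesPow k p n f ∧ ∃ g, InLaurentSeriesPow k p n g ∧ f * g = 1

/-!
Write `f n = cₙ tᵉⁿ qₙ` with `cₙ ∈ kˣ`, `pⁿ ∣ eₙ` and `qₙ ∈ 1 + tᵖⁿ k⟦tᵖⁿ⟧`. Since `qₙ - 1` has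
order at least `pⁿ → ∞`, the tails `Vₙ = ∏_{m ≥ n} qₘ` converge coefficientwise, lie in `k⟦tᵖⁿ⟧`
and satisfy `qₙ = Vₙ / Vₙ₊₁`. The constants are absorbed by `dₙ = (c₀ ⋯ cₙ₋₁)⁻¹`. For the
exponents, let `Eₙ = e₀ + ⋯ + eₙ₋₁`; since `Eₙ₊₁ ≡ Eₙ [ZMOD pⁿ]`, the residues `Eₙ mod pⁿ` are the
truncations of one `p`-adic integer `α`, whose digits `aₙ` give `eₙ = sₙ + aₙ pⁿ - sₙ₊₁` with
`sₙ = (Eₙ mod pⁿ) - Eₙ` divisible by `pⁿ`. Then `uₙ = dₙ tˢⁿ Vₙ`.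
-/

open HahnSeries Filter Topology

theorem Int.exists_digits_of_pow_dvd {p : ℕ} (hp : 0 < p) (e : ℕ → ℤ)
    (he : ∀ n, (p : ℤ) ^ n ∣ e n) :
    ∃ (a : ℕ → ℕ) (s : ℕ → ℤ), (∀ n, a n < p) ∧ (∀ n, (p : ℤ) ^ n ∣ s n) ∧
      ∀ n, e n + s (n + 1) = s n + a n * p ^ n := by
  set E : ℕ → ℤ := fun n => ∑ m ∈ Finset.range n, e m
  have hpn : ∀ n, (0 : ℤ) < (p : ℤ) ^ n := fun n => by positivity
  have hdigit : ∀ n, 0 ≤ E (n + 1) % (p : ℤ) ^ (n + 1) / (p : ℤ) ^ n := fun n =>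
    Int.ediv_nonneg (Int.emod_nonneg _ (hpn _).ne') (hpn n).le
  refine ⟨fun n => (E (n + 1) % (p : ℤ) ^ (n + 1) / (p : ℤ) ^ n).toNat,
    fun n => E n % (p : ℤ) ^ n - E n, fun n => ?_, fun n => ?_, fun n => ?_⟩ <;> dsimp only
  · have : E (n + 1) % (p : ℤ) ^ (n + 1) / (p : ℤ) ^ n < p :=
      (Int.ediv_lt_iff_lt_mul (hpn n)).mpr
        (by rw [← pow_succ']; exact Int.emod_lt_of_pos _ (hpn _))
    omega
  · rw [Int.emod_def]
    exact ⟨-(E n / (p : ℤ) ^ n), by ring⟩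
  · obtain ⟨c, hc⟩ := he n
    have hE : E (n + 1) = E n + (p : ℤ) ^ n * c := by
      simp only [E, Finset.sum_range_succ, hc]
    have hlow : E (n + 1) % (p : ℤ) ^ (n + 1) % (p : ℤ) ^ n = E n % (p : ℤ) ^ n := by
      rw [Int.emod_emod_of_dvd _ (pow_dvd_pow _ n.le_succ), hE, Int.add_mul_emod_self_left]
    have := Int.emod_add_mul_ediv (E (n + 1) % (p : ℤ) ^ (n + 1)) ((p : ℤ) ^ n)
    rw [Int.toNat_of_nonneg (hdigit n)]
    linear_combination -this + hlow - hE + hc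

namespace LaurentSeries

variable {k : Type*} [Field k]

variable (k) in
/-- The substitution `t ↦ t ^ d`, whose field range is `k((t^d))`. -/
noncomputable def expand (d : ℕ) [NeZero d] :
    LaurentSeries k →+* LaurentSeries k :=
  embDomainRingHom (AddMonoidHom.mulLeft (d : ℤ)) (mul_right_injective₀ (by simp [NeZero.ne]))
    fun _ _ => mul_le_mul_iff_of_pos_left (Int.natCast_pos.mpr (NeZero.pos d))

theorem mem_fieldRange_expand_iff {d : ℕ} [NeZero d] {x : LaurentSeries k} :
    x ∈ (expand k d).fieldRange ↔ ∀ i ∈ x.support, (d : ℤ) ∣ i := by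
  constructor
  · rintro ⟨y, rfl⟩ i hi
    obtain ⟨j, -, rfl⟩ := support_embDomain_subset hi
    exact dvd_mul_right _ _
  · intro hx
    have hbdd : BddBelow (Function.support fun i : ℤ => x.coeff (d * i)) := by
      refine ⟨-|x.order|, fun i hi => ?_⟩
      have hd : (1 : ℤ) ≤ d := Int.natCast_pos.mpr (NeZero.pos d)
      have := order_le_of_coeff_ne_zero hi
      rcases le_or_gt 0 i with h | h
      · linarith [abs_nonneg x.order]
      · nlinarith [neg_abs_le x.order]
    refine ⟨ofSuppBddBelow _ hbdd, ?_⟩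
    ext j
    by_cases hj : (d : ℤ) ∣ j
    · obtain ⟨i, rfl⟩ := hj
      exact embDomain_coeff (a := i)
    · rw [show x.coeff j = 0 from by simpa using mt (hx j) hj]
      refine embDomain_of_notMem_range ?_
      rintro ⟨i, rfl⟩
      exact hj (dvd_mul_right _ _)

theorem inLaurentSeriesPow_iff_mem_fieldRange {p : ℕ} [NeZero p] {n : ℕ} {x : LaurentSeries k} :
    InLaurentSeriesPow k p n x ↔ x ∈ (expand k (p ^ n)).fieldRange := by
  rw [mem_fieldRange_expand_iff, InLaurentSeriesPow, Nat.cast_pow]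

theorem isUnitLaurentSeriesPow_iff {p : ℕ} [NeZero p] {n : ℕ} {x : LaurentSeries k} :
    IsUnitLaurentSeriesPow k p n x ↔ x ∈ (expand k (p ^ n)).fieldRange ∧ x ≠ 0 := by
  simp only [IsUnitLaurentSeriesPow, inLaurentSeriesPow_iff_mem_fieldRange]
  refine ⟨fun ⟨hx, _, _, h⟩ => ⟨hx, left_ne_zero_of_mul_eq_one h⟩,
    fun ⟨hx, h0⟩ => ⟨hx, x⁻¹, inv_mem hx, mul_inv_cancel₀ h0⟩⟩

theorem single_mem_fieldRange_expand {d : ℕ} [NeZero d] {i : ℤ} (hi : (d : ℤ) ∣ i) (c : k) :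
    single i c ∈ (expand k d).fieldRange :=
  mem_fieldRange_expand_iff.mpr fun _ hj => by
    rwa [Set.mem_singleton_iff.mp (support_single_subset hj)]

theorem dvd_order_of_mem_fieldRange_expand {d : ℕ} [NeZero d] {x : LaurentSeries k}
    (hx : x ∈ (expand k d).fieldRange) (h0 : x ≠ 0) : (d : ℤ) ∣ x.order :=
  mem_fieldRange_expand_iff.mp hx _ (coeff_order_eq_zero.not.mpr h0)

theorem mem_fieldRange_expand_of_single_mul {d : ℕ} [NeZero d] {i : ℤ} (hi : (d : ℤ) ∣ i)
    {c : k} (hc : c ≠ 0) {y : LaurentSeries k} (h : single i c * y ∈ (expand k d).fieldRange) :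
    y ∈ (expand k d).fieldRange := by
  have := mul_mem (inv_mem (single_mem_fieldRange_expand hi c)) h
  rwa [inv_mul_cancel_left₀ (single_ne_zero hc)] at this

variable (k) in
/-- `k⟦t^d⟧ = k⟦t⟧ ∩ k((t^d))`. -/
noncomputable def powerSeriesSubring (d : ℕ) [NeZero d] :
    Subring (PowerSeries k) :=
  (expand k d).fieldRange.toSubring.comap (ofPowerSeries ℤ k)

theorem mem_powerSeriesSubring_iff {d : ℕ} [NeZero d] {φ : PowerSeries k} :
    φ ∈ powerSeriesSubring k d ↔ ∀ i, ¬ d ∣ i → PowerSeries.coeff i φ = 0 := by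
  simp only [powerSeriesSubring, Subring.mem_comap, Subfield.mem_toSubring,
    mem_fieldRange_expand_iff, HahnSeries.mem_support, PowerSeries.coeff_coe]
  refine ⟨fun h i hi => by_contra fun hc => hi (by exact_mod_cast h i (by simpa using hc)),
    fun h i hi => ?_⟩
  split_ifs at hi with hneg
  · exact absurd rfl hi
  · rw [← Int.natAbs_of_nonneg (not_lt.mp hneg)]
    exact Int.natCast_dvd_natCast.mpr (by_contra fun hc => hi (h _ hc))

theorem powerSeriesSubring_le_of_dvd {d d' : ℕ} [NeZero d] [NeZero d'] (h : d ∣ d') :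
    powerSeriesSubring k d' ≤ powerSeriesSubring k d := fun _ hφ =>
  mem_powerSeriesSubring_iff.mpr fun i hi =>
    mem_powerSeriesSubring_iff.mp hφ i fun hi' => hi (h.trans hi')

open scoped PowerSeries.WithPiTopology in
theorem isClosed_powerSeriesSubring [TopologicalSpace k] [T1Space k] (d : ℕ) [NeZero d] :
    IsClosed (powerSeriesSubring k d : Set (PowerSeries k)) := by
  have : (powerSeriesSubring k d : Set (PowerSeries k)) =
      ⋂ i, {φ | ¬ d ∣ i → PowerSeries.coeff i φ = 0} := by
    ext φ; simp [mem_powerSeriesSubring_iff]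
  rw [this]
  refine isClosed_iInter fun i => ?_
  by_cases hi : d ∣ i
  · simp [hi]
  · simp only [hi, not_false_eq_true, forall_const]
    exact isClosed_singleton.preimage (PowerSeries.WithPiTopology.continuous_coeff k i)

theorem le_order_sub_one {d : ℕ} [NeZero d] {φ : PowerSeries k}
    (hφ : φ ∈ powerSeriesSubring k d) (h1 : PowerSeries.constantCoeff φ = 1) :
    (d : ℕ∞) ≤ (φ - 1).order := by
  refine PowerSeries.nat_le_order _ _ fun i hi => ?_
  rcases Nat.eq_zero_or_pos i with rfl | hpos
  · simp [h1]
  · rw [map_sub, mem_powerSeriesSubring_iff.mp hφ i (Nat.not_dvd_of_pos_of_lt hpos hi),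
      PowerSeries.coeff_one, if_neg hpos.ne', sub_zero]

theorem exists_eq_single_mul_powerSeries {x : LaurentSeries k} (hx : x ≠ 0) :
    ∃ φ : PowerSeries k, PowerSeries.constantCoeff φ = 1 ∧
      x = single x.order x.leadingCoeff * (φ : LaurentSeries k) := by
  have hc : x.leadingCoeff ≠ 0 := leadingCoeff_ne_zero.mpr hx
  refine ⟨PowerSeries.C x.leadingCoeff⁻¹ * x.powerSeriesPart, ?_, ?_⟩
  · rw [map_mul, PowerSeries.constantCoeff_C, ← PowerSeries.coeff_zero_eq_constantCoeff_apply,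
      powerSeriesPart_coeff, Nat.cast_zero, add_zero, ← leadingCoeff_eq, inv_mul_cancel₀ hc]
  · rw [map_mul, ofPowerSeries_C, C_apply, ← mul_assoc, single_mul_single, add_zero,
      mul_inv_cancel₀ hc]
    exact x.single_order_mul_powerSeriesPart.symm

theorem exists_eq_single_mul_mem_powerSeriesSubring {d : ℕ} [NeZero d] {x : LaurentSeries k}
    (hx : x ∈ (expand k d).fieldRange) (h0 : x ≠ 0) :
    ∃ φ ∈ powerSeriesSubring k d, PowerSeries.constantCoeff φ = 1 ∧
      x = single x.order x.leadingCoeff * (φ : LaurentSeries k) := by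
  obtain ⟨φ, hφ1, hxφ⟩ := exists_eq_single_mul_powerSeries h0
  exact ⟨φ, mem_fieldRange_expand_of_single_mul (dvd_order_of_mem_fieldRange_expand hx h0)
    (leadingCoeff_ne_zero.mpr h0) (hxφ ▸ hx), hφ1, hxφ⟩

open scoped PowerSeries.WithPiTopology in
theorem exists_tail_products {p : ℕ} [NeZero p] (hp : 1 < p) {q : ℕ → PowerSeries k}
    (hq : ∀ n, q n ∈ powerSeriesSubring k (p ^ n))
    (hq1 : ∀ n, PowerSeries.constantCoeff (q n) = 1) :
    ∃ V : ℕ → PowerSeries k, (∀ n, V n ∈ powerSeriesSubring k (p ^ n)) ∧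
      (∀ n, PowerSeries.constantCoeff (V n) = 1) ∧ ∀ n, V n = q n * V (n + 1) := by
  let _ : TopologicalSpace k := ⊥
  have _ : DiscreteTopology k := ⟨rfl⟩
  have htop : Tendsto (fun m => (q m - 1).order) atTop (𝓝 ⊤) := by
    refine ENat.tendsto_nhds_top_iff_natCast_lt.mpr fun N => eventually_atTop.mpr ⟨N, ?_⟩
    intro m hm
    calc (N : ℕ∞) < (p ^ m : ℕ) := by exact_mod_cast hm.trans_lt (Nat.lt_pow_self hp)
      _ ≤ (q m - 1).order := le_order_sub_one (hq m) (hq1 m)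
  have hmul n : Multipliable fun m => q (m + n) := by
    simpa using PowerSeries.WithPiTopology.multipliable_one_add_of_tendsto_order_atTop_nhds_top k
      (htop.comp (tendsto_add_atTop_nat n))
  refine ⟨fun n => ∏' m, q (m + n), fun n => ?_, fun n => ?_, fun n => ?_⟩
  · refine tprod_mem (isClosed_powerSeriesSubring _) fun m => ?_
    exact powerSeriesSubring_le_of_dvd (pow_dvd_pow p (Nat.le_add_left n m)) (hq (m + n))
  · rw [(hmul n).map_tprod _ (PowerSeries.WithPiTopology.continuous_constantCoeff k)]
    simp [hq1]
  · show ∏' m, q (m + n) = q n * ∏' m, q (m + (n + 1))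
    rw [tprod_eq_zero_mul' (f := fun m => q (m + n))
      (by simpa only [add_right_comm _ 1 n, ← add_assoc] using hmul (n + 1))]
    simp [add_right_comm, add_assoc]

theorem coe_ne_zero_of_constantCoeff_eq_one {φ : PowerSeries k}
    (h : PowerSeries.constantCoeff φ = 1) : (φ : LaurentSeries k) ≠ 0 := by
  rw [Ne, map_eq_zero_iff _ ofPowerSeries_injective]
  rintro rfl
  simp at h

theorem tt_pow (m : ℕ) : tt k ^ m = single (m : ℤ) 1 := by
  rw [tt, single_pow, one_pow, nsmul_eq_mul, mul_one]

theorem exists_digits_single_mul_single_eq {p : ℕ} (hp : 0 < p) {e : ℕ → ℤ}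
    (he : ∀ n, (p : ℤ) ^ n ∣ e n) {l : ℕ → k} (hl : ∀ n, l n ≠ 0) :
    ∃ (a : ℕ → ℕ) (s : ℕ → ℤ) (c : ℕ → k), (∀ n, a n < p) ∧ (∀ n, (p : ℤ) ^ n ∣ s n) ∧
      (∀ n, c n ≠ 0) ∧
      ∀ n, single (e n) (l n) * single (s (n + 1)) (c (n + 1)) =
        single (s n) (c n) * tt k ^ (a n * p ^ n) := by
  obtain ⟨a, s, ha, hs, has⟩ := Int.exists_digits_of_pow_dvd hp e he
  refine ⟨a, s, fun n => (∏ m ∈ Finset.range n, l m)⁻¹, ha, hs,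
    fun n => inv_ne_zero (Finset.prod_ne_zero_iff.mpr fun m _ => hl m), fun n => ?_⟩
  dsimp only
  rw [single_mul_single, tt_pow, single_mul_single, has n, Finset.prod_range_succ, mul_inv,
    mul_left_comm, mul_inv_cancel₀ (hl n), mul_one, Nat.cast_mul, Nat.cast_pow]

end LaurentSeries

theorem stratified_line_bundle_monomial_representative_general
    (k : Type*) [Field k] (p : ℕ) [CharP k p] (hp : 0 < p)
    (f : ℕ → LaurentSeries k)
    (hf : ∀ n, IsUnitLaurentSeriesPow k p n (f n)) :
    ∃ (a : ℕ → ℕ) (u : ℕ → LaurentSeries k),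
      (∀ n, a n < p) ∧
      (∀ n, IsUnitLaurentSeriesPow k p n (u n)) ∧
      ∀ n, f n = u n * (tt k) ^ (a n * p ^ n) * (u (n + 1))⁻¹ := by
  have : NeZero p := ⟨hp.ne'⟩
  have hp1 : 1 < p := (CharP.char_is_prime_of_pos k p).out.one_lt
  simp only [LaurentSeries.isUnitLaurentSeriesPow_iff] at hf ⊢
  choose q hq hq1 hfq using fun n =>
    LaurentSeries.exists_eq_single_mul_mem_powerSeriesSubring (hf n).1 (hf n).2
  obtain ⟨V, hV, hV1, hVq⟩ := LaurentSeries.exists_tail_products hp1 hq hq1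
  obtain ⟨a, s, c, ha, hs, hc, hsc⟩ := LaurentSeries.exists_digits_single_mul_single_eq hp
    (fun n => by exact_mod_cast LaurentSeries.dvd_order_of_mem_fieldRange_expand (hf n).1 (hf n).2)
    (fun n => leadingCoeff_ne_zero.mpr (hf n).2)
  have hu n : single (s n) (c n) * (V n : LaurentSeries k) ≠ 0 :=
    mul_ne_zero (single_ne_zero (hc n)) (LaurentSeries.coe_ne_zero_of_constantCoeff_eq_one (hV1 n))
  refine ⟨a, fun n => single (s n) (c n) * V n, ha, fun n => ⟨?_, hu n⟩, fun n => ?_⟩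
  · exact mul_mem (LaurentSeries.single_mem_fieldRange_expand (by exact_mod_cast hs n) _) (hV n)
  · rw [eq_mul_inv_iff_mul_eq₀ (hu _)]
    dsimp only
    rw [hVq n, map_mul]
    linear_combination (single (s (n + 1)) (c (n + 1)) * (V (n + 1) : LaurentSeries k)) * hfq n
      + (q n * V (n + 1) : LaurentSeries k) * hsc n

/-- **Every stratified line bundle on `k((t))` is isomorphic to `O(α)` for some `α ∈ ℤₚ`.**
For every sequence `(f n)` of units of `k((t))^{pⁿ}` there exist a digit sequence
`(a n)` (with `0 ≤ a n < p`) and units `u n` of `k((t))^{pⁿ}` such that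
`f n = u n · t^{aₙ pⁿ} · u (n+1)⁻¹` for all `n`. -/
theorem stratified_line_bundle_monomial_representative
    (k : Type*) [Field k] [IsAlgClosed k] (p : ℕ) [CharP k p] (hp : 0 < p)
    (f : ℕ → LaurentSeries k)
    (hf : ∀ n, IsUnitLaurentSeriesPow k p n (f n)) :
    ∃ (a : ℕ → ℕ) (u : ℕ → LaurentSeries k),
      (∀ n, a n < p) ∧
      (∀ n, IsUnitLaurentSeriesPow k p n (u n)) ∧
      ∀ n, f n = u n * (tt k) ^ (a n * p ^ n) * (u (n + 1))⁻¹ :=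
  stratified_line_bundle_monomial_representative_general k p hp f hf
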